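/- There exist absolute constants c, C > 0 such that for all β with 0 < β < 1/3, all μ with 0 < μ ≤ 1, all s ∈ ℝ and every Schwartz function f : ℝ → ℂ: β·∫ ⟨ξ⟩^{2s}·|f̂(ξ)|² dξ + c·β·√μ·∫ ⟨ξ⟩^{2s}·|ξ|·|f̂(ξ)|² dξ ≤ ∫ ⟨ξ⟩^{2s}·K_μ(ξ)·|f̂(ξ)|² dξ ≤ C·( ∫ ⟨ξ⟩^{2s}·|f̂(ξ)|² dξ + √μ·∫ ⟨ξ⟩^{2s}·|ξ|·|f̂(ξ)|² dξ ). (By Plancherel's theorem this is the two-sided bound β‖f‖²_{H^s} + cβ√μ‖D^{1/2}f‖²_{H^s} ≤ ‖√K_μ(D) f‖²_{H^s} ≤ c‖f‖²_{H^s} + c√μ‖D^{1/2}f‖²_{H^s} for 0 < β < 1/3.) -/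

import Mathlib

open scoped FourierTransform

/-- The symbol `T_μ(ξ) = tanh(√μ |ξ|)/(√μ |ξ|)`, with value `1` at `ξ = 0`. -/
noncomputable def Tmu (μ ξ : ℝ) : ℝ :=
  if ξ = 0 then 1 else Real.tanh (Real.sqrt μ * |ξ|) / (Real.sqrt μ * |ξ|)

/-- The full-dispersion symbol `K_μ(ξ) = T_μ(ξ)·(1 + β μ ξ²)`. -/
noncomputable def Kmu (β μ ξ : ℝ) : ℝ := Tmu μ ξ * (1 + β * μ * ξ ^ 2)

open Real

lemma myHasDerivAt_tanh (x : ℝ) : HasDerivAt Real.tanh (1 - Real.tanh x ^ 2) x := by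
  have h : HasDerivAt (fun y => Real.sinh y / Real.cosh y)
      ((Real.cosh x * Real.cosh x - Real.sinh x * Real.sinh x) / Real.cosh x ^ 2) x :=
    (Real.hasDerivAt_sinh x).div (Real.hasDerivAt_cosh x) (Real.cosh_pos x).ne'
  have he : Real.tanh = fun y => Real.sinh y / Real.cosh y :=
    funext fun y => Real.tanh_eq_sinh_div_cosh y
  rw [he]
  convert h using 1
  have h1 : Real.cosh x ^ 2 - Real.sinh x ^ 2 = 1 := Real.cosh_sq_sub_sinh_sq x
  have h2 : Real.cosh x ≠ 0 := (Real.cosh_pos x).ne'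
  simp only []
  field_simp

lemma myContinuous_tanh : Continuous Real.tanh := by
  have he : Real.tanh = fun y => Real.sinh y / Real.cosh y :=
    funext fun y => Real.tanh_eq_sinh_div_cosh y
  rw [he]
  exact Real.continuous_sinh.div Real.continuous_cosh fun x => (Real.cosh_pos x).ne'

lemma tanh_nonneg' {x : ℝ} (hx : 0 ≤ x) : 0 ≤ Real.tanh x := by
  rw [Real.tanh_eq_sinh_div_cosh]
  exact div_nonneg (Real.sinh_nonneg_iff.2 hx) (Real.cosh_pos x).le

lemma tanh_lt_one' (x : ℝ) : Real.tanh x < 1 := by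
  rw [Real.tanh_eq_sinh_div_cosh, div_lt_one (Real.cosh_pos x)]
  exact Real.sinh_lt_cosh x

lemma tanh_sq_lt_one (x : ℝ) : Real.tanh x ^ 2 < 1 := by
  rw [Real.tanh_eq_sinh_div_cosh, div_pow, div_lt_one (by positivity)]
  nlinarith [Real.cosh_sq_sub_sinh_sq x, Real.cosh_pos x]

lemma tanh_monotone : Monotone Real.tanh := by
  have hd : Differentiable ℝ Real.tanh := fun x => (myHasDerivAt_tanh x).differentiableAt
  apply monotone_of_deriv_nonneg hd
  intro x
  rw [(myHasDerivAt_tanh x).deriv]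
  nlinarith [_root_.tanh_sq_lt_one x]

lemma tanh_le_self {x : ℝ} (hx : 0 ≤ x) : Real.tanh x ≤ x := by
  have hd : ∀ y : ℝ, HasDerivAt (fun z => z - Real.tanh z) (Real.tanh y ^ 2) y := by
    intro y
    have := (hasDerivAt_id y).sub (myHasDerivAt_tanh y)
    exact this.congr_deriv (by ring)
  have hmono : Monotone (fun z => z - Real.tanh z) := by
    apply monotone_of_deriv_nonneg (fun y => (hd y).differentiableAt)
    intro y; rw [(hd y).deriv]; positivity
  have := hmono hx
  simpa [Real.tanh_zero] using this

lemma cubic_le_tanh {x : ℝ} (hx : 0 ≤ x) : x - x ^ 3 / 3 ≤ Real.tanh x := by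
  have hd : ∀ y : ℝ, HasDerivAt (fun z => Real.tanh z - z + z ^ 3 / 3)
      (y ^ 2 - Real.tanh y ^ 2) y := by
    intro y
    have h1 : HasDerivAt (fun z : ℝ => z ^ 3 / 3) (y ^ 2) y := by
      have := (hasDerivAt_pow 3 y).div_const 3
      exact this.congr_deriv (by norm_num)
    have := ((myHasDerivAt_tanh y).sub (hasDerivAt_id y)).add h1
    exact this.congr_deriv (by ring)
  have hmono : MonotoneOn (fun z => Real.tanh z - z + z ^ 3 / 3) (Set.Ici 0) := by
    apply monotoneOn_of_deriv_nonneg (convex_Ici (0:ℝ))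
      (Continuous.continuousOn (by exact (myContinuous_tanh.sub continuous_id).add (by continuity)))
      (fun y _ => (hd y).differentiableAt.differentiableWithinAt)
    intro y hy
    rw [interior_Ici, Set.mem_Ioi] at hy
    rw [(hd y).deriv]
    have h1 : Real.tanh y ≤ y := tanh_le_self hy.le
    have h2 : 0 ≤ Real.tanh y := tanh_nonneg' hy.le
    nlinarith
  have := hmono (Set.self_mem_Ici) (Set.mem_Ici.2 hx) hx
  simp only [Real.tanh_zero] at this
  linarith

lemma two_thirds_le_tanh_one : 2/3 ≤ Real.tanh 1 := by
  have := cubic_le_tanh (x := 1) (by norm_num)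
  norm_num at this
  linarith

lemma Kmu_lower {β μ : ℝ} (hβ0 : 0 < β) (hβ : β < 1/3) (hμ : 0 < μ) (hμ1 : μ ≤ 1) (ξ : ℝ) :
    β * (1 + (1/3) * (Real.sqrt μ * |ξ|)) ≤ Kmu β μ ξ := by
  set x := Real.sqrt μ * |ξ| with hxdef
  have hsq : 0 < Real.sqrt μ := Real.sqrt_pos.2 hμ
  have hx2 : μ * ξ ^ 2 = x ^ 2 := by
    rw [hxdef, mul_pow, Real.sq_sqrt hμ.le, sq_abs]
  rcases eq_or_ne ξ 0 with h0 | h0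
  · have hx0 : x = 0 := by rw [hxdef, h0]; simp
    rw [Kmu, Tmu, if_pos h0, h0, hx0]
    norm_num
    linarith
  · have hxpos : 0 < x := mul_pos hsq (abs_pos.2 h0)
    have hK : Kmu β μ ξ = Real.tanh x / x * (1 + β * x ^ 2) := by
      rw [Kmu, Tmu, if_neg h0, hxdef, ← hx2]; ring_nf
    rw [hK]
    rcases le_total x 1 with hx1 | hx1
    · have h1 : 2/3 * x ≤ Real.tanh x := by
        have := cubic_le_tanh hxpos.le
        nlinarith
      have h2 : 2/3 ≤ Real.tanh x / x := (le_div_iff₀ hxpos).2 (by linarith)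
      have h3 : (1:ℝ) ≤ 1 + β * x ^ 2 := by nlinarith
      have h4 : (2:ℝ)/3 * 1 ≤ Real.tanh x / x * (1 + β * x ^ 2) :=
        mul_le_mul h2 h3 (by norm_num) (by positivity)
      nlinarith
    · have h1 : 2/3 ≤ Real.tanh x := by
        have := tanh_monotone hx1
        linarith [two_thirds_le_tanh_one]
      have h2 : 2/3 * (1 + β * x ^ 2) ≤ Real.tanh x * (1 + β * x ^ 2) :=
        mul_le_mul_of_nonneg_right h1 (by positivity)
      have key : β * (1 + 1/3 * x) * x ≤ Real.tanh x * (1 + β * x ^ 2) := by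
        nlinarith [mul_nonneg hβ0.le (sq_nonneg (x - 3/2))]
      calc β * (1 + 1/3 * x) = β * (1 + 1/3 * x) * x / x := by field_simp
        _ ≤ Real.tanh x * (1 + β * x ^ 2) / x := by gcongr
        _ = Real.tanh x / x * (1 + β * x ^ 2) := by ring

lemma Kmu_upper {β μ : ℝ} (hβ0 : 0 < β) (hβ : β < 1/3) (hμ : 0 < μ) (hμ1 : μ ≤ 1) (ξ : ℝ) :
    Kmu β μ ξ ≤ 1 + Real.sqrt μ * |ξ| := by
  set x := Real.sqrt μ * |ξ| with hxdef
  have hsq : 0 < Real.sqrt μ := Real.sqrt_pos.2 hμ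
  have hx2 : μ * ξ ^ 2 = x ^ 2 := by
    rw [hxdef, mul_pow, Real.sq_sqrt hμ.le, sq_abs]
  rcases eq_or_ne ξ 0 with h0 | h0
  · have hx0 : x = 0 := by rw [hxdef, h0]; simp
    rw [Kmu, Tmu, if_pos h0, h0, hx0]
    norm_num
  · have hxpos : 0 < x := mul_pos hsq (abs_pos.2 h0)
    have hK : Kmu β μ ξ = Real.tanh x / x * (1 + β * x ^ 2) := by
      rw [Kmu, Tmu, if_neg h0, hxdef, ← hx2]; ring_nf
    rw [hK]
    have h1 : Real.tanh x ≤ x := tanh_le_self hxpos.le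
    have h2 : Real.tanh x ≤ 1 := (tanh_lt_one' x).le
    have h3 : 0 ≤ Real.tanh x := tanh_nonneg' hxpos.le
    have hexp : Real.tanh x / x * (1 + β * x ^ 2)
        = Real.tanh x / x + β * x * Real.tanh x := by
      field_simp
    rw [hexp]
    have h4 : Real.tanh x / x ≤ 1 := (div_le_one hxpos).2 h1
    nlinarith [mul_le_mul_of_nonneg_left h2 hxpos.le,
      mul_le_mul_of_nonneg_right hβ.le (mul_nonneg hxpos.le h3)]

lemma Kmu_nonneg {β μ : ℝ} (hβ0 : 0 < β) (hμ : 0 < μ) (ξ : ℝ) : 0 ≤ Kmu β μ ξ := by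
  have hsq : 0 < Real.sqrt μ := Real.sqrt_pos.2 hμ
  have hT : 0 ≤ Tmu μ ξ := by
    rw [Tmu]
    split
    · norm_num
    · exact div_nonneg (tanh_nonneg' (by positivity)) (by positivity)
  have : (0:ℝ) ≤ 1 + β * μ * ξ ^ 2 := by positivity
  exact mul_nonneg hT this

open MeasureTheory

lemma one_add_abs_pow_le (m : ℕ) (ξ : ℝ) : (1 + |ξ|) ^ m ≤ 2 ^ m * (1 + |ξ| ^ m) := by
  rcases le_total |ξ| 1 with h | h
  · have h1 : (1 + |ξ|) ^ m ≤ 2 ^ m :=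
      pow_le_pow_left₀ (by positivity) (by linarith) m
    have h2 : (0:ℝ) ≤ |ξ| ^ m := by positivity
    nlinarith [pow_pos (show (0:ℝ) < 2 by norm_num) m]
  · have h1 : (1 + |ξ|) ^ m ≤ (2 * |ξ|) ^ m :=
      pow_le_pow_left₀ (by positivity) (by linarith) m
    rw [mul_pow] at h1
    nlinarith [pow_pos (show (0:ℝ) < 2 by norm_num) m]

lemma integrable_weight (g : SchwartzMap ℝ ℂ) (m : ℕ) :
    Integrable (fun ξ : ℝ => (1 + |ξ|) ^ m * ‖g ξ‖ ^ 2) := by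
  obtain ⟨M, hMpos, hM⟩ := g.decay 0 0
  have hM' : ∀ x : ℝ, ‖g x‖ ≤ M := by
    intro x
    have := hM x
    simpa using this
  have hD : Integrable (fun ξ : ℝ =>
      2 ^ m * M * ‖g ξ‖ + 2 ^ m * M * (‖ξ‖ ^ m * ‖g ξ‖)) := by
    exact (g.integrable.norm.const_mul _).add
      ((g.integrable_pow_mul volume m).const_mul _)
  apply hD.mono'
  · apply Continuous.aestronglyMeasurable
    continuity
  · filter_upwards with ξ
    have hA := one_add_abs_pow_le m ξ
    have hB : ‖g ξ‖ ^ 2 ≤ M * ‖g ξ‖ := by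
      have := hM' ξ
      nlinarith [norm_nonneg (g ξ)]
    have hpos : (0:ℝ) ≤ (1 + |ξ|) ^ m := by positivity
    have key : (1 + |ξ|) ^ m * ‖g ξ‖ ^ 2 ≤ (2 ^ m * (1 + |ξ| ^ m)) * (M * ‖g ξ‖) :=
      mul_le_mul hA hB (by positivity) (by positivity)
    rw [Real.norm_of_nonneg (by positivity)]
    calc (1 + |ξ|) ^ m * ‖g ξ‖ ^ 2 ≤ (2 ^ m * (1 + |ξ| ^ m)) * (M * ‖g ξ‖) := key
      _ = 2 ^ m * M * ‖g ξ‖ + 2 ^ m * M * (‖ξ‖ ^ m * ‖g ξ‖) := by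
          rw [Real.norm_eq_abs]; ring

lemma integrable_main (g : SchwartzMap ℝ ℂ) (s : ℝ) (w : ℝ → ℝ)
    (hw_meas : AEStronglyMeasurable w volume) (hw : ∀ ξ, |w ξ| ≤ 1 + |ξ|) :
    Integrable (fun ξ : ℝ => (1 + ξ ^ 2) ^ s * w ξ * ‖g ξ‖ ^ 2) := by
  obtain ⟨n, hn⟩ := exists_nat_ge s
  apply (integrable_weight g (2 * n + 1)).mono'
  · apply AEStronglyMeasurable.mul
    apply AEStronglyMeasurable.mul _ hw_meas
    · exact (Continuous.rpow_const (by continuity)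
        (fun x => Or.inl (by positivity))).aestronglyMeasurable
    · exact (Continuous.aestronglyMeasurable (by continuity))
  · filter_upwards with ξ
    have h1 : (0:ℝ) < 1 + ξ ^ 2 := by positivity
    have h2 : (1 + ξ ^ 2) ^ s ≤ (1 + ξ ^ 2) ^ (n : ℝ) :=
      Real.rpow_le_rpow_of_exponent_le (by nlinarith) hn
    have h3 : (1 + ξ ^ 2) ^ (n : ℝ) = (1 + ξ ^ 2) ^ (n : ℕ) := by
      rw [Real.rpow_natCast]
    have h4 : (1 + ξ ^ 2 : ℝ) ^ (n : ℕ) ≤ ((1 + |ξ|) ^ 2) ^ (n : ℕ) := by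
      apply pow_le_pow_left₀ h1.le
      nlinarith [abs_nonneg ξ, sq_abs ξ]
    have h5 : (1 + ξ ^ 2) ^ s ≤ (1 + |ξ|) ^ (2 * n) := by
      rw [← pow_mul] at h4
      calc (1 + ξ ^ 2) ^ s ≤ (1 + ξ ^ 2) ^ (n : ℝ) := h2
        _ = (1 + ξ ^ 2) ^ (n : ℕ) := h3
        _ ≤ (1 + |ξ|) ^ (2 * n) := h4
    have h6 : (0:ℝ) ≤ (1 + ξ ^ 2) ^ s := Real.rpow_nonneg h1.le s
    rw [Real.norm_eq_abs, abs_mul, abs_mul, abs_of_nonneg h6, abs_of_nonneg (sq_nonneg ‖g ξ‖)]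
    have key : (1 + ξ ^ 2) ^ s * |w ξ| ≤ (1 + |ξ|) ^ (2 * n) * (1 + |ξ|) :=
      mul_le_mul h5 (hw ξ) (abs_nonneg _) (by positivity)
    calc (1 + ξ ^ 2) ^ s * |w ξ| * ‖g ξ‖ ^ 2
        ≤ ((1 + |ξ|) ^ (2 * n) * (1 + |ξ|)) * ‖g ξ‖ ^ 2 :=
          mul_le_mul_of_nonneg_right key (sq_nonneg _)
      _ = (1 + |ξ|) ^ (2 * n + 1) * ‖g ξ‖ ^ 2 := by rw [pow_succ]; ring

lemma Kmu_measurable (β μ : ℝ) : Measurable (Kmu β μ) := by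
  apply Measurable.mul
  · unfold Tmu
    apply Measurable.ite (measurableSet_eq) measurable_const
    exact (myContinuous_tanh.comp (continuous_const.mul continuous_abs)).measurable.div
      (continuous_const.mul continuous_abs).measurable
  · fun_prop

open scoped FourierTransform

theorem coercivity_Kmu_small_beta :
    ∃ c > 0, ∃ C > 0, ∀ β : ℝ, 0 < β → β < 1/3 → ∀ μ : ℝ, 0 < μ → μ ≤ 1 → ∀ s : ℝ,
      ∀ f : SchwartzMap ℝ ℂ,
        β * (∫ ξ : ℝ, (1 + ξ ^ 2) ^ s * ‖𝓕 (⇑f) ξ‖ ^ 2)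
            + c * β * Real.sqrt μ * (∫ ξ : ℝ, (1 + ξ ^ 2) ^ s * |ξ| * ‖𝓕 (⇑f) ξ‖ ^ 2)
          ≤ (∫ ξ : ℝ, (1 + ξ ^ 2) ^ s * Kmu β μ ξ * ‖𝓕 (⇑f) ξ‖ ^ 2) ∧
        (∫ ξ : ℝ, (1 + ξ ^ 2) ^ s * Kmu β μ ξ * ‖𝓕 (⇑f) ξ‖ ^ 2)
          ≤ C * ((∫ ξ : ℝ, (1 + ξ ^ 2) ^ s * ‖𝓕 (⇑f) ξ‖ ^ 2)
              + Real.sqrt μ * (∫ ξ : ℝ, (1 + ξ ^ 2) ^ s * |ξ| * ‖𝓕 (⇑f) ξ‖ ^ 2)) := by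
  refine ⟨1/3, by norm_num, 1, by norm_num, ?_⟩
  intro β hβ0 hβ μ hμ0 hμ1 s f
  set g := SchwartzMap.fourierTransformCLM ℂ f with hgdef
  have hgf : 𝓕 ⇑f = ⇑g := rfl
  rw [hgf]
  have hsμ : 0 < Real.sqrt μ := Real.sqrt_pos.2 hμ0
  have hsμ1 : Real.sqrt μ ≤ 1 := by
    rw [show (1:ℝ) = Real.sqrt 1 by simp]
    exact Real.sqrt_le_sqrt hμ1
  have hA : Integrable (fun ξ : ℝ => (1 + ξ ^ 2) ^ s * ‖g ξ‖ ^ 2) := by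
    have := integrable_main g s (fun _ => 1) aestronglyMeasurable_const
      (fun ξ => by rw [abs_one]; linarith [abs_nonneg ξ])
    simpa using this
  have hB : Integrable (fun ξ : ℝ => (1 + ξ ^ 2) ^ s * |ξ| * ‖g ξ‖ ^ 2) :=
    integrable_main g s (fun ξ => |ξ|) continuous_abs.aestronglyMeasurable
      (fun ξ => by rw [abs_abs]; linarith [abs_nonneg ξ])
  have hKbound : ∀ ξ : ℝ, |Kmu β μ ξ| ≤ 1 + |ξ| := by
    intro ξ
    rw [abs_of_nonneg (Kmu_nonneg hβ0 hμ0 ξ)]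
    have h1 := Kmu_upper hβ0 hβ hμ0 hμ1 ξ
    have h2 : Real.sqrt μ * |ξ| ≤ 1 * |ξ| :=
      mul_le_mul_of_nonneg_right hsμ1 (abs_nonneg ξ)
    linarith
  have hC : Integrable (fun ξ : ℝ => (1 + ξ ^ 2) ^ s * Kmu β μ ξ * ‖g ξ‖ ^ 2) :=
    integrable_main g s (Kmu β μ) (Kmu_measurable β μ).aestronglyMeasurable hKbound
  constructor
  · have hpt : (fun ξ : ℝ => β * ((1 + ξ ^ 2) ^ s * ‖g ξ‖ ^ 2)
        + (1/3 * β * Real.sqrt μ) * ((1 + ξ ^ 2) ^ s * |ξ| * ‖g ξ‖ ^ 2))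
        ≤ (fun ξ : ℝ => (1 + ξ ^ 2) ^ s * Kmu β μ ξ * ‖g ξ‖ ^ 2) := by
      intro ξ
      have hK := Kmu_lower hβ0 hβ hμ0 hμ1 ξ
      have hP : (0:ℝ) ≤ (1 + ξ ^ 2) ^ s := Real.rpow_nonneg (by positivity) s
      have key := mul_le_mul_of_nonneg_left hK (mul_nonneg hP (sq_nonneg ‖g ξ‖))
      calc β * ((1 + ξ ^ 2) ^ s * ‖g ξ‖ ^ 2)
            + (1/3 * β * Real.sqrt μ) * ((1 + ξ ^ 2) ^ s * |ξ| * ‖g ξ‖ ^ 2)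
          = ((1 + ξ ^ 2) ^ s * ‖g ξ‖ ^ 2) * (β * (1 + 1/3 * (Real.sqrt μ * |ξ|))) := by ring
        _ ≤ ((1 + ξ ^ 2) ^ s * ‖g ξ‖ ^ 2) * Kmu β μ ξ := key
        _ = (1 + ξ ^ 2) ^ s * Kmu β μ ξ * ‖g ξ‖ ^ 2 := by ring
    have h := integral_mono ((hA.const_mul β).add (hB.const_mul (1/3 * β * Real.sqrt μ))) hC hpt
    simp only [Pi.add_apply] at h
    rw [integral_add (hA.const_mul β) (hB.const_mul _), integral_const_mul,
      integral_const_mul] at h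
    linarith
  · have hpt : (fun ξ : ℝ => (1 + ξ ^ 2) ^ s * Kmu β μ ξ * ‖g ξ‖ ^ 2)
        ≤ (fun ξ : ℝ => (1 + ξ ^ 2) ^ s * ‖g ξ‖ ^ 2
          + Real.sqrt μ * ((1 + ξ ^ 2) ^ s * |ξ| * ‖g ξ‖ ^ 2)) := by
      intro ξ
      have hK := Kmu_upper hβ0 hβ hμ0 hμ1 ξ
      have hP : (0:ℝ) ≤ (1 + ξ ^ 2) ^ s := Real.rpow_nonneg (by positivity) s
      have key := mul_le_mul_of_nonneg_left hK (mul_nonneg hP (sq_nonneg ‖g ξ‖))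
      calc (1 + ξ ^ 2) ^ s * Kmu β μ ξ * ‖g ξ‖ ^ 2
          = ((1 + ξ ^ 2) ^ s * ‖g ξ‖ ^ 2) * Kmu β μ ξ := by ring
        _ ≤ ((1 + ξ ^ 2) ^ s * ‖g ξ‖ ^ 2) * (1 + Real.sqrt μ * |ξ|) := key
        _ = (1 + ξ ^ 2) ^ s * ‖g ξ‖ ^ 2
            + Real.sqrt μ * ((1 + ξ ^ 2) ^ s * |ξ| * ‖g ξ‖ ^ 2) := by ring
    have h := integral_mono hC (hA.add (hB.const_mul (Real.sqrt μ))) hpt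
    simp only [Pi.add_apply] at h
    rw [integral_add hA (hB.const_mul _), integral_const_mul] at h
    linarith
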